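/- The matrix equivalence relation A ∼ B, defined by existence of identities I_α, I_β with A⊗I_α = B⊗I_β, is preserved by the semi-tensor product: if A ∼ A' and B ∼ B', then A⋉B ∼ A'⋉B'. -/

import Mathlib

open Matrix Kronecker

noncomputable section

/-- `A ⊗ I_s`, reindexed to `Fin (m*s) × Fin (n*s)` index types. -/
def mkron {m n : ℕ} (A : Matrix (Fin m) (Fin n) ℝ) (s : ℕ) :
    Matrix (Fin (m * s)) (Fin (n * s)) ℝ :=
  Matrix.reindex finProdFinEquiv finProdFinEquiv
    (Matrix.kroneckerMap (· * ·) A (1 : Matrix (Fin s) (Fin s) ℝ))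

/-- `x ⊗ 1_s`: each entry of `x` repeated `s` times (Kronecker with the all-ones vector). -/
def vkron {r : ℕ} (x : Fin r → ℝ) (s : ℕ) : Fin (r * s) → ℝ :=
  fun i => x (finProdFinEquiv.symm i).1

/-- The semi-tensor (M-) product `A ⋉ B = (A ⊗ I_{t/n})(B ⊗ I_{t/p})`, `t = lcm n p`. -/
def stp {m n p q : ℕ} (A : Matrix (Fin m) (Fin n) ℝ) (B : Matrix (Fin p) (Fin q) ℝ) :
    Matrix (Fin (m * (Nat.lcm n p / n))) (Fin (q * (Nat.lcm n p / p))) ℝ :=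
  mkron A (Nat.lcm n p / n) *
    (mkron B (Nat.lcm n p / p)).submatrix
      (Fin.cast (by
        rw [Nat.mul_div_cancel' (Nat.dvd_lcm_left n p),
          Nat.mul_div_cancel' (Nat.dvd_lcm_right n p)])) id

/-- The vector (V-) product `A ⋉_V x = (A ⊗ I_{t/n})(x ⊗ 1_{t/r})`, `t = lcm n r`. -/
def vprod {m n r : ℕ} (A : Matrix (Fin m) (Fin n) ℝ) (x : Fin r → ℝ) :
    Fin (m * (Nat.lcm n r / n)) → ℝ :=
  (mkron A (Nat.lcm n r / n)).mulVec fun j =>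
    vkron x (Nat.lcm n r / r)
      (Fin.cast (by
        rw [Nat.mul_div_cancel' (Nat.dvd_lcm_left n r),
          Nat.mul_div_cancel' (Nat.dvd_lcm_right n r)]) j)

/-- V-addition `x ⊞ y = (x ⊗ 1_{t/m}) + (y ⊗ 1_{t/n})`, `t = lcm m n`. -/
def vadd2 {m n : ℕ} (x : Fin m → ℝ) (y : Fin n → ℝ) : Fin (Nat.lcm m n) → ℝ :=
  fun i =>
    vkron x (Nat.lcm m n / m) (Fin.cast (Nat.mul_div_cancel' (Nat.dvd_lcm_left m n)).symm i) +
    vkron y (Nat.lcm m n / n) (Fin.cast (Nat.mul_div_cancel' (Nat.dvd_lcm_right m n)).symm i)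

/-- V-subtraction `x ⊟ y = (x ⊗ 1_{t/m}) - (y ⊗ 1_{t/n})`, `t = lcm m n`. -/
def vsub2 {m n : ℕ} (x : Fin m → ℝ) (y : Fin n → ℝ) : Fin (Nat.lcm m n) → ℝ :=
  fun i =>
    vkron x (Nat.lcm m n / m) (Fin.cast (Nat.mul_div_cancel' (Nat.dvd_lcm_left m n)).symm i) -
    vkron y (Nat.lcm m n / n) (Fin.cast (Nat.mul_div_cancel' (Nat.dvd_lcm_right m n)).symm i)

/-- The dimension-normalized norm `‖x‖_V = sqrt((1/k) ∑ xᵢ²)`. -/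
def vnorm {k : ℕ} (x : Fin k → ℝ) : ℝ :=
  Real.sqrt ((∑ i, x i ^ 2) / k)

/-- The dimension-free inner product `⟨x,y⟩_V = (1/t)⟨x⊗1_{t/m}, y⊗1_{t/n}⟩`. -/
def vinner {m n : ℕ} (x : Fin m → ℝ) (y : Fin n → ℝ) : ℝ :=
  (∑ i : Fin (Nat.lcm m n),
      vkron x (Nat.lcm m n / m) (Fin.cast (Nat.mul_div_cancel' (Nat.dvd_lcm_left m n)).symm i) *
      vkron y (Nat.lcm m n / n)
        (Fin.cast (Nat.mul_div_cancel' (Nat.dvd_lcm_right m n)).symm i)) /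
    (Nat.lcm m n)

/-- The dimension-free distance `d(x,y) = ‖x ⊟ y‖_V`. -/
def vdist {m n : ℕ} (x : Fin m → ℝ) (y : Fin n → ℝ) : ℝ := vnorm (vsub2 x y)

/-- The spectral norm `‖A‖ = sqrt(σ_max(AᵀA))` (largest eigenvalue of `AᵀA = AᴴA` over `ℝ`). -/
def specNorm {m n : ℕ} (A : Matrix (Fin m) (Fin n) ℝ) : ℝ :=
  Real.sqrt (⨆ i, (Matrix.isHermitian_conjTranspose_mul_self A).eigenvalues i)

/-- Vector equivalence: `x ↔ y` iff `x ⊗ 1_α = y ⊗ 1_β` for some `α, β ≥ 1`. -/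
def VEquiv {m n : ℕ} (x : Fin m → ℝ) (y : Fin n → ℝ) : Prop :=
  ∃ (α β : ℕ), 0 < α ∧ 0 < β ∧
    ∃ h : m * α = n * β, ∀ i, vkron x α i = vkron y β (Fin.cast h i)

/-- Matrix equivalence: `A ∼ B` iff `A ⊗ I_α = B ⊗ I_β` for some `α, β ≥ 1`. -/
def MEquiv {m n p q : ℕ} (A : Matrix (Fin m) (Fin n) ℝ) (B : Matrix (Fin p) (Fin q) ℝ) : Prop :=
  ∃ (α β : ℕ), 0 < α ∧ 0 < β ∧
    ∃ (h1 : m * α = p * β) (h2 : n * α = q * β),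
      ∀ i j, mkron A α i j = mkron B β (Fin.cast h1 i) (Fin.cast h2 j)

/-- `R^r` is `A`-invariant: `A ⋉_V x ∈ R^r` for every `x ∈ R^r`. -/
def AInvariant {m n : ℕ} (A : Matrix (Fin m) (Fin n) ℝ) (r : ℕ) : Prop :=
  ∀ x : Fin r → ℝ, ∃ y : Fin r → ℝ,
    (⟨_, vprod A x⟩ : Σ k : ℕ, Fin k → ℝ) = ⟨r, y⟩

/-!
Tensoring with identities composes, `A ⊗ I_{ac} = (A ⊗ I_a) ⊗ I_c`, and commutes with
products, so `(A ⋉ B) ⊗ I_γ = (A ⊗ I_{sγ}) (B ⊗ I_{uγ})` with `s = t/n`, `u = t/p`, `t = lcm n p`.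
Given `A ⊗ I_a = A' ⊗ I_{a'}` and `B ⊗ I_b = B' ⊗ I_{b'}`, it then suffices to pick `γ, γ'` with
`sγ = ac`, `s'γ' = a'c`, `uγ = bd`, `u'γ' = b'd` and `tγ = t'γ'`; `γ = t'·na·pb`, `γ' = t·na·pb` do.
-/

section ZeroExtend

variable {α : Type*}

/-- Forgetting the dimensions of a matrix turns the `Fin.cast`s in `MEquiv` and `stp` into
identities. -/
def Matrix.zeroExtend [Zero α] {m n : ℕ} (M : Matrix (Fin m) (Fin n) α) (i j : ℕ) : α :=
  if h : i < m ∧ j < n then M ⟨i, h.1⟩ ⟨j, h.2⟩ else 0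

/-- `f ⊗ I_s` for a matrix `f` indexed by `ℕ × ℕ`. -/
def natKron [Zero α] (f : ℕ → ℕ → α) (s i j : ℕ) : α :=
  if i % s = j % s then f (i / s) (j / s) else 0

theorem Nat.mod_mul_eq_mod_mul_iff {i j a c : ℕ} :
    i % (c * a) = j % (c * a) ↔ i % c = j % c ∧ i / c % a = j / c % a := by
  rcases Nat.eq_zero_or_pos c with rfl | hc
  · simp
  rw [Nat.mod_mul, Nat.mod_mul]
  constructor
  · intro h
    have hmod : i % c = j % c := by
      simpa [Nat.add_mul_mod_self_left, Nat.mod_mod] using congrArg (· % c) h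
    rw [hmod] at h
    exact ⟨hmod, Nat.eq_of_mul_eq_mul_left hc (Nat.add_left_cancel h)⟩
  · rintro ⟨h₁, h₂⟩
    rw [h₁, h₂]

theorem natKron_natKron [Zero α] (f : ℕ → ℕ → α) (a c : ℕ) :
    natKron (natKron f a) c = natKron f (a * c) := by
  funext i j
  simp only [natKron, Nat.div_div_eq_div_mul, mul_comm a c, Nat.mod_mul_eq_mod_mul_iff]
  split_ifs <;> tauto

theorem natKron_mul_eq_of_eq [Zero α] {f g : ℕ → ℕ → α} {a b : ℕ}
    (h : natKron f a = natKron g b) (c : ℕ) : natKron f (a * c) = natKron g (b * c) := by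
  rw [← natKron_natKron, h, natKron_natKron]

theorem Matrix.zeroExtend_injective [Zero α] {m n : ℕ} :
    Function.Injective (zeroExtend : Matrix (Fin m) (Fin n) α → ℕ → ℕ → α) := by
  intro M N h
  ext i j
  simpa [zeroExtend] using congrFun (congrFun h i) j

theorem Matrix.zeroExtend_eq_iff [Zero α] {m n m' n' : ℕ}
    (M : Matrix (Fin m) (Fin n) α) (M' : Matrix (Fin m') (Fin n') α) (h₁ : m = m') (h₂ : n = n') :
    zeroExtend M = zeroExtend M' ↔ ∀ i j, M i j = M' (Fin.cast h₁ i) (Fin.cast h₂ j) := by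
  subst h₁ h₂
  rw [zeroExtend_injective.eq_iff, ← Matrix.ext_iff]
  simp only [Fin.cast_eq_self]

theorem Matrix.zeroExtend_submatrix_cast [Zero α] {m m' n : ℕ} (h : m' = m)
    (M : Matrix (Fin m) (Fin n) α) :
    zeroExtend (M.submatrix (Fin.cast h) id) = zeroExtend M := by
  subst h
  rfl

theorem Matrix.zeroExtend_mul [NonUnitalNonAssocSemiring α] {m n q : ℕ}
    (M : Matrix (Fin m) (Fin n) α) (N : Matrix (Fin n) (Fin q) α) (i j : ℕ) :
    zeroExtend (M * N) i j = ∑ k ∈ Finset.range n, zeroExtend M i k * zeroExtend N k j := by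
  by_cases h : i < m ∧ j < q
  · rw [← Fin.sum_univ_eq_sum_range (fun k => zeroExtend M i k * zeroExtend N k j)]
    simp [zeroExtend, h, Matrix.mul_apply]
  · rw [zeroExtend, dif_neg h]
    refine (Finset.sum_eq_zero fun k _ => ?_).symm
    by_cases hi : i < m
    · simp [zeroExtend, show ¬ j < q by tauto]
    · simp [zeroExtend, hi]

end ZeroExtend

theorem zeroExtend_mkron {m n s : ℕ} (hs : 0 < s) (A : Matrix (Fin m) (Fin n) ℝ) :
    zeroExtend (mkron A s) = natKron (zeroExtend A) s := by
  funext i j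
  by_cases h : i < m * s ∧ j < n * s
  · have hi : i / s < m := Nat.div_lt_of_lt_mul (mul_comm m s ▸ h.1)
    have hj : j / s < n := Nat.div_lt_of_lt_mul (mul_comm n s ▸ h.2)
    simp only [zeroExtend, natKron, h, hi, hj, and_self, ↓reduceDIte, mkron, reindex_apply,
      submatrix_apply, finProdFinEquiv_symm_apply, kroneckerMap_apply, Matrix.one_apply,
      Fin.ext_iff, Fin.coe_modNat, mul_ite, mul_one, mul_zero]
    rfl
  · have : ¬ (i / s < m ∧ j / s < n) := by
      rwa [Nat.div_lt_iff_lt_mul hs, Nat.div_lt_iff_lt_mul hs]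
    simp [zeroExtend, natKron, h, this]

theorem mkron_mul {m n q s : ℕ} (M : Matrix (Fin m) (Fin n) ℝ) (N : Matrix (Fin n) (Fin q) ℝ) :
    mkron (M * N) s = mkron M s * mkron N s := by
  simp only [mkron, Matrix.reindex_apply]
  rw [Matrix.submatrix_mul_equiv _ _ _ finProdFinEquiv.symm _, ← Matrix.mul_kronecker_mul,
    Matrix.one_mul]

theorem mequiv_iff_natKron_eq {m n p q : ℕ} (A : Matrix (Fin m) (Fin n) ℝ) (B : Matrix (Fin p) (Fin q) ℝ) :
    MEquiv A B ↔ ∃ α β : ℕ, 0 < α ∧ 0 < β ∧ m * α = p * β ∧ n * α = q * β ∧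
      natKron (zeroExtend A) α = natKron (zeroExtend B) β := by
  constructor
  · rintro ⟨α, β, hα, hβ, h₁, h₂, h⟩
    refine ⟨α, β, hα, hβ, h₁, h₂, ?_⟩
    rwa [← zeroExtend_mkron hα, ← zeroExtend_mkron hβ, zeroExtend_eq_iff _ _ h₁ h₂]
  · rintro ⟨α, β, hα, hβ, h₁, h₂, h⟩
    refine ⟨α, β, hα, hβ, h₁, h₂, ?_⟩
    rwa [← zeroExtend_mkron hα, ← zeroExtend_mkron hβ, zeroExtend_eq_iff _ _ h₁ h₂] at h

theorem Nat.mul_lcm_div_eq (n p : ℕ) : n * (Nat.lcm n p / n) = p * (Nat.lcm n p / p) := by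
  rw [Nat.mul_div_cancel' (Nat.dvd_lcm_left n p), Nat.mul_div_cancel' (Nat.dvd_lcm_right n p)]

/-- Unlike the body of `stp`, whose product elaborates through the `CStarMatrix` instance, this
product is `Matrix` multiplication, so matrix lemmas rewrite it. -/
theorem stp_eq_mul {m n p q : ℕ} (A : Matrix (Fin m) (Fin n) ℝ) (B : Matrix (Fin p) (Fin q) ℝ) :
    stp A B = mkron A (Nat.lcm n p / n) *
      (mkron B (Nat.lcm n p / p)).submatrix (Fin.cast (Nat.mul_lcm_div_eq n p)) id :=
  rfl

theorem natKron_zeroExtend_stp {m n p q γ : ℕ} (hn : 0 < n) (hp : 0 < p) (hγ : 0 < γ)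
    (A : Matrix (Fin m) (Fin n) ℝ) (B : Matrix (Fin p) (Fin q) ℝ) (i j : ℕ) :
    natKron (zeroExtend (stp A B)) γ i j =
      ∑ k ∈ Finset.range (Nat.lcm n p * γ),
        natKron (zeroExtend A) (Nat.lcm n p / n * γ) i k *
          natKron (zeroExtend B) (Nat.lcm n p / p * γ) k j := by
  have hL : 0 < Nat.lcm n p := Nat.lcm_pos hn hp
  have hs : 0 < Nat.lcm n p / n := Nat.div_pos (Nat.le_of_dvd hL (Nat.dvd_lcm_left n p)) hn
  have hu : 0 < Nat.lcm n p / p := Nat.div_pos (Nat.le_of_dvd hL (Nat.dvd_lcm_right n p)) hp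
  rw [← zeroExtend_mkron hγ, stp_eq_mul, mkron_mul, zeroExtend_mul]
  simp only [zeroExtend_mkron hγ, zeroExtend_submatrix_cast, zeroExtend_mkron hs,
    zeroExtend_mkron hu, natKron_natKron, Nat.mul_div_cancel' (Nat.dvd_lcm_left n p)]

theorem Nat.div_mul_eq_of_eq_mul {n a L K J : ℕ} (hn : n ∣ L) (hK : K = n * a * J) :
    L / n * K = a * (L * J) := by
  rw [hK, ← mul_assoc, ← mul_assoc, Nat.div_mul_cancel hn]
  ring

theorem stp_respects_mequiv_general {m n m' n' p q p' q' : ℕ}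
    (hn : 0 < n) (hn' : 0 < n')
    (hp : 0 < p) (hp' : 0 < p')
    (A : Matrix (Fin m) (Fin n) ℝ) (A' : Matrix (Fin m') (Fin n') ℝ)
    (B : Matrix (Fin p) (Fin q) ℝ) (B' : Matrix (Fin p') (Fin q') ℝ)
    (hA : MEquiv A A') (hB : MEquiv B B') :
    MEquiv (stp A B) (stp A' B') := by
  obtain ⟨a, a', ha, ha', hma, hna, hAA⟩ := (mequiv_iff_natKron_eq A A').1 hA
  obtain ⟨b, b', hb, hb', hpb, hqb, hBB⟩ := (mequiv_iff_natKron_eq B B').1 hB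
  set t := Nat.lcm n p
  set t' := Nat.lcm n' p'
  have hsγ : t / n * (t' * (n * a) * (p * b)) = a * (t * (t' * (p * b))) :=
    Nat.div_mul_eq_of_eq_mul (Nat.dvd_lcm_left n p) (by ring)
  have hs'γ' : t' / n' * (t * (n * a) * (p * b)) = a' * (t * (t' * (p * b))) := by
    rw [mul_left_comm t t']
    exact Nat.div_mul_eq_of_eq_mul (Nat.dvd_lcm_left n' p') (by rw [hna]; ring)
  have huγ : t / p * (t' * (n * a) * (p * b)) = b * (t * (t' * (n * a))) :=
    Nat.div_mul_eq_of_eq_mul (Nat.dvd_lcm_right n p) (by ring)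
  have hu'γ' : t' / p' * (t * (n * a) * (p * b)) = b' * (t * (t' * (n * a))) := by
    rw [mul_left_comm t t']
    exact Nat.div_mul_eq_of_eq_mul (Nat.dvd_lcm_right n' p') (by rw [hpb]; ring)
  have ht : 0 < t := Nat.lcm_pos hn hp
  have ht' : 0 < t' := Nat.lcm_pos hn' hp'
  rw [mequiv_iff_natKron_eq]
  refine ⟨t' * (n * a) * (p * b), t * (n * a) * (p * b), by positivity, by positivity,
    by rw [mul_assoc, hsγ, mul_assoc, hs'γ', ← mul_assoc, hma, mul_assoc],
    by rw [mul_assoc, huγ, mul_assoc, hu'γ', ← mul_assoc, hqb, mul_assoc], ?_⟩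
  funext i j
  rw [natKron_zeroExtend_stp hn hp (by positivity), natKron_zeroExtend_stp hn' hp' (by positivity),
    hsγ, hs'γ', huγ, hu'γ', natKron_mul_eq_of_eq hAA, natKron_mul_eq_of_eq hBB,
    show t * (t' * (n * a) * (p * b)) = t' * (t * (n * a) * (p * b)) by ring]

/-- matrix equivalence is preserved by the semi-tensor product. -/
theorem stp_respects_mequiv {m n m' n' p q p' q' : ℕ}
    (hm : 0 < m) (hn : 0 < n) (hm' : 0 < m') (hn' : 0 < n')
    (hp : 0 < p) (hq : 0 < q) (hp' : 0 < p') (hq' : 0 < q')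
    (A : Matrix (Fin m) (Fin n) ℝ) (A' : Matrix (Fin m') (Fin n') ℝ)
    (B : Matrix (Fin p) (Fin q) ℝ) (B' : Matrix (Fin p') (Fin q') ℝ)
    (hA : MEquiv A A') (hB : MEquiv B B') :
    MEquiv (stp A B) (stp A' B') :=
  stp_respects_mequiv_general hn hn' hp hp' A A' B B' hA hB
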